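/- arXiv:1107.5259 — 6 statements merged into one kernel-verified Lean document; each statement's English description precedes it below -/
import Mathlib

section
/- (Sah's lemma for group cohomology, degree 1.) Let G be a group, V an abelian group with a G-action by automorphisms, and g a central element of G such that the map v ↦ g·v − v is a bijection of V. Then every crossed homomorphism c : G → V (i.e. c(xy) = c(x) + x·c(y) for all x, y ∈ G) is principal, i.e. there exists v ∈ V with c(x) = x·v − v for all x ∈ G. -/
/-!
Evaluating a crossed homomorphism `c` on `g * x = x * g` in two ways gives
`g • c x - c x = x • c g - c g`; the principal crossed homomorphism of `v` satisfies the
same identity. Choosing `v` with `g • v - v = c g`, both sides agree, so `c x` and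
`x • v - v` have the same image under the injective map `w ↦ g • w - w`.
-/

section CrossedHom

variable {G V : Type*} [Group G] [AddCommGroup V] [DistribMulAction G V]

theorem crossedHom_smul_sub_of_commute {c : G → V} (hc : ∀ x y : G, c (x * y) = c x + x • c y)
    {g x : G} (hgx : g * x = x * g) : g • c x - c x = x • c g - c g := by
  have h := hc g x
  rw [hgx, hc x g] at h
  linear_combination (norm := abel) h.symm

theorem principal_isCrossedHom (v : V) (x y : G) :
    (x * y) • v - v = (x • v - v) + x • (y • v - v) := by
  rw [smul_sub, mul_smul]
  abel

end CrossedHom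

/-- Sah's lemma for group cohomology in degree 1. -/
theorem sah_lemma_group_cohomology_one
    {G : Type*} [Group G] {V : Type*} [AddCommGroup V] [DistribMulAction G V]
    (g : G) (hg : ∀ x : G, g * x = x * g)
    (hbij : Function.Bijective (fun v : V => g • v - v))
    (c : G → V) (hc : ∀ x y : G, c (x * y) = c x + x • c y) :
    ∃ v : V, ∀ x : G, c x = x • v - v := by
  obtain ⟨v, hv⟩ := hbij.2 (c g)
  refine ⟨v, fun x => hbij.1 ?_⟩
  calc g • c x - c x = x • c g - c g := crossedHom_smul_sub_of_commute hc (hg x)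
    _ = x • (g • v - v) - (g • v - v) := by rw [← hv]
    _ = g • (x • v - v) - (x • v - v) :=
      (crossedHom_smul_sub_of_commute (c := (· • v - v))
        (principal_isCrossedHom v) (hg x)).symm
end

section
/- (Sah's lemma for Lie algebra cohomology, degree 1.) Let 𝔤 be a Lie algebra over a field k, V a 𝔤-module, and x a central element of 𝔤 (i.e. [x,y] = 0 for all y ∈ 𝔤) such that the action map v ↦ x·v is a bijection of V. Then every 1-cocycle c : 𝔤 → V (a k-linear map with c([a,b]) = a·c(b) − b·c(a) for all a,b ∈ 𝔤) is a coboundary, i.e. there exists v ∈ V with c(a) = a·v for all a ∈ 𝔤. -/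
section

variable {L M : Type*} [LieRing L] [AddCommGroup M] [LieRingModule L M]

theorem lie_lie_comm_of_lie_eq_zero {x a : L} (h : ⁅x, a⁆ = 0) (v : M) :
    ⁅x, ⁅a, v⁆⁆ = ⁅a, ⁅x, v⁆⁆ :=
  sub_eq_zero.mp (by rw [← lie_lie, h, zero_lie])

theorem lie_apply_comm_of_lie_eq_zero {c : L → M}
    (hc : ∀ a b : L, c ⁅a, b⁆ = ⁅a, c b⁆ - ⁅b, c a⁆) {x a : L} (h : ⁅x, a⁆ = 0) :
    ⁅x, c a⁆ = ⁅a, c x⁆ := by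
  have hc_zero : c 0 = 0 := by simpa using hc 0 0
  have hxa := hc x a
  rw [h, hc_zero] at hxa
  exact sub_eq_zero.mp hxa.symm

end

/-- Sah's lemma for Lie algebra cohomology in degree 1. -/
theorem sah_lemma_lie_algebra_cohomology_one
    {k : Type*} [Field k] {L : Type*} [LieRing L] [LieAlgebra k L]
    {V : Type*} [AddCommGroup V] [Module k V] [LieRingModule L V] [LieModule k L V]
    (x : L) (hx : ∀ y : L, ⁅x, y⁆ = 0)
    (hbij : Function.Bijective (fun v : V => ⁅x, v⁆))
    (c : L →ₗ[k] V) (hc : ∀ a b : L, c ⁅a, b⁆ = ⁅a, c b⁆ - ⁅b, c a⁆) :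
    ∃ v : V, ∀ a : L, c a = ⁅a, v⁆ := by
  obtain ⟨v, hv⟩ := hbij.surjective (c x)
  refine ⟨v, fun a => hbij.injective ?_⟩
  calc ⁅x, c a⁆ = ⁅a, c x⁆ := lie_apply_comm_of_lie_eq_zero hc (hx a)
    _ = ⁅a, ⁅x, v⁆⁆ := by rw [← hv]
    _ = ⁅x, ⁅a, v⁆⁆ := (lie_lie_comm_of_lie_eq_zero (hx a) v).symm
end

section
/- Let k be a field and V a k-vector space with subspaces T ⊆ G ⊆ V. Let W₋₁ = { f ∈ End_k(V) : f(V) ⊆ G, f(G) ⊆ T, f(T) = 0 } and let π_G : V → V/G and π_T : V → V/T be the quotient maps. Then the k-linear map Φ : Hom_k(V/G, G) ⊕ Hom_k(V/T, T) → End_k(V), Φ(f, g) = f ∘ π_G + g ∘ π_T (viewing the values of f and g as elements of V), has image exactly W₋₁, and its kernel is the set of pairs (ι ∘ h, −h ∘ q) for h ∈ Hom_k(V/G, T), where ι : T → G is the inclusion and q : V/T → V/G is the canonical surjection. In particular there is a short exact sequence 0 → Hom_k(V/G, T) → Hom_k(V/G, G) ⊕ Hom_k(V/T, T) → W₋₁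 → 0. -/
/-!
Choosing a linear retraction `r : V → G` (possible over a field), every `f ∈ W₋₁` splits as
`f = f ∘ (1 - r) + f ∘ r`: the first summand kills `G` and lands in `G`, the second kills `T` and
lands in `T`, so they factor through `π_G` and `π_T` respectively. If `a ∘ π_G + b ∘ π_T = 0`,
then `a ∘ π_G = -(b ∘ π_T)` takes values in `T`, so `a = ι ∘ h`, and evaluating on `V` gives
`b = -(h ∘ q)`.
-/

namespace Submodule

theorem exists_eq_inclusion_comp_iff {R M N : Type*} [Semiring R] [AddCommMonoid M] [Module R M]
    [AddCommMonoid N] [Module R N] {p p' : Submodule R N} (h : p ≤ p') (a : M →ₗ[R] p') :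
    (∃ b : M →ₗ[R] p, a = inclusion h ∘ₗ b) ↔ ∀ x, (a x : N) ∈ p := by
  refine ⟨?_, fun ha => ⟨(p'.subtype ∘ₗ a).codRestrict p ha, rfl⟩⟩
  rintro ⟨b, rfl⟩ x
  exact (b x).2

theorem exists_eq_subtype_comp_comp_mkQ {R M N : Type*} [Ring R] [AddCommGroup M] [Module R M]
    [AddCommGroup N] [Module R N] {p : Submodule R M} {p' : Submodule R N}
    (f : M →ₗ[R] N) (hf : ∀ x, f x ∈ p') (hp : ∀ x ∈ p, f x = 0) :
    ∃ g : (M ⧸ p) →ₗ[R] p', f = p'.subtype ∘ₗ g ∘ₗ p.mkQ :=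
  ⟨p.liftQ (f.codRestrict p' hf) fun x hx => Subtype.ext (hp x hx), rfl⟩

/-- Membership in `W₋₁`: `f` lowers the filtration `T ⊆ G ⊆ V` by one step. -/
def IsWeightMinusOne {R V : Type*} [Semiring R] [AddCommMonoid V] [Module R V]
    (T G : Submodule R V) (f : Module.End R V) : Prop :=
  (∀ v, f v ∈ G) ∧ (∀ v ∈ G, f v ∈ T) ∧ (∀ v ∈ T, f v = 0)

section Ring

variable {R V : Type*} [Ring R] [AddCommGroup V] [Module R V] {T G : Submodule R V}

theorem isWeightMinusOne_subtype_comp_mkQ_add (hTG : T ≤ G) (a : (V ⧸ G) →ₗ[R] G)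
    (b : (V ⧸ T) →ₗ[R] T) :
    IsWeightMinusOne T G (G.subtype ∘ₗ a ∘ₗ G.mkQ + T.subtype ∘ₗ b ∘ₗ T.mkQ) := by
  have hG : ∀ v ∈ G, G.mkQ v = 0 := fun v hv => (Quotient.mk_eq_zero G).2 hv
  refine ⟨fun v => G.add_mem (a _).2 (hTG (b _).2), fun v hv => ?_, fun v hv => ?_⟩
  · simp [hG v hv]
  · simp [hG v (hTG hv), (Quotient.mk_eq_zero T).2 hv]

theorem subtype_comp_mkQ_add_eq_zero_iff (hTG : T ≤ G) {q : (V ⧸ T) →ₗ[R] (V ⧸ G)}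
    (hq : ∀ v : V, q (T.mkQ v) = G.mkQ v) (a : (V ⧸ G) →ₗ[R] G) (b : (V ⧸ T) →ₗ[R] T) :
    G.subtype ∘ₗ a ∘ₗ G.mkQ + T.subtype ∘ₗ b ∘ₗ T.mkQ = 0 ↔
      ∃ h : (V ⧸ G) →ₗ[R] T, a = inclusion hTG ∘ₗ h ∧ b = -(h ∘ₗ q) := by
  have hq' : ∀ v : V, q (Quotient.mk v) = Quotient.mk v := hq
  constructor
  · intro hab
    have hba : ∀ v : V, (b (Quotient.mk v) : V) = -a (Quotient.mk v) := fun v =>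
      eq_neg_of_add_eq_zero_right (LinearMap.congr_fun hab v)
    obtain ⟨h, rfl⟩ := (exists_eq_inclusion_comp_iff hTG a).2 fun x => by
      obtain ⟨v, rfl⟩ := Quotient.mk_surjective G x
      rw [← neg_neg (a _ : V), ← hba]
      exact T.neg_mem (b _).2
    refine ⟨h, rfl, linearMap_qext _ (LinearMap.ext fun v => Subtype.ext ?_)⟩
    simp [hba, hq']
  · rintro ⟨h, rfl, rfl⟩
    ext v
    simp [hq']

end Ring

theorem IsWeightMinusOne.exists_eq {k V : Type*} [DivisionRing k] [AddCommGroup V] [Module k V]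
    {T G : Submodule k V} (hTG : T ≤ G) {f : Module.End k V} (hf : IsWeightMinusOne T G f) :
    ∃ (a : (V ⧸ G) →ₗ[k] G) (b : (V ⧸ T) →ₗ[k] T),
      f = G.subtype ∘ₗ a ∘ₗ G.mkQ + T.subtype ∘ₗ b ∘ₗ T.mkQ := by
  obtain ⟨hV, hG, hT⟩ := hf
  obtain ⟨r, hr⟩ := G.subtype.exists_leftInverse_of_injective G.ker_subtype
  have hr' : ∀ v ∈ G, (r v : V) = v := fun v hv =>
    congrArg Subtype.val (LinearMap.congr_fun hr ⟨v, hv⟩)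
  obtain ⟨a, ha⟩ := exists_eq_subtype_comp_comp_mkQ (p := G) (p' := G)
    (f ∘ₗ (LinearMap.id - G.subtype ∘ₗ r)) (fun v => hV _) fun v hv => by simp [hr' v hv]
  obtain ⟨b, hb⟩ := exists_eq_subtype_comp_comp_mkQ (p := T) (p' := T)
    (f ∘ₗ G.subtype ∘ₗ r) (fun v => hG _ (r v).2) fun v hv => by simp [hr' v (hTG hv), hT v hv]
  refine ⟨a, b, ?_⟩
  rw [← ha, ← hb, ← LinearMap.comp_add, sub_add_cancel, LinearMap.comp_id]

end Submodule

open Submodule in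
/-- The weight-(−1) part of `End(V)` for a two-step filtration `T ⊆ G ⊆ V` is
the quotient of `Hom(V/G, G) ⊕ Hom(V/T, T)` by `Hom(V/G, T)`. -/
theorem weight_minus_one_presentation
    {k V : Type*} [Field k] [AddCommGroup V] [Module k V]
    (T G : Submodule k V) (hTG : T ≤ G)
    (Φ : ((V ⧸ G) →ₗ[k] G) × ((V ⧸ T) →ₗ[k] T) → Module.End k V)
    (hΦ : ∀ p, Φ p = G.subtype ∘ₗ p.1 ∘ₗ G.mkQ + T.subtype ∘ₗ p.2 ∘ₗ T.mkQ)
    (q : (V ⧸ T) →ₗ[k] (V ⧸ G))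
    (hq : ∀ v : V, q (T.mkQ v) = G.mkQ v) :
    Set.range Φ = {f : Module.End k V |
        (∀ v : V, f v ∈ G) ∧ (∀ v ∈ G, f v ∈ T) ∧ (∀ v ∈ T, f v = 0)} ∧
    {p | Φ p = 0} = {p | ∃ h : (V ⧸ G) →ₗ[k] T,
        p.1 = Submodule.inclusion hTG ∘ₗ h ∧ p.2 = -(h ∘ₗ q)} ∧
    Function.Injective (fun h : (V ⧸ G) →ₗ[k] T =>
        ((Submodule.inclusion hTG ∘ₗ h, -(h ∘ₗ q)) :
          ((V ⧸ G) →ₗ[k] G) × ((V ⧸ T) →ₗ[k] T))) := by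
  obtain rfl : Φ = fun p => G.subtype ∘ₗ p.1 ∘ₗ G.mkQ + T.subtype ∘ₗ p.2 ∘ₗ T.mkQ := funext hΦ
  refine ⟨Set.ext fun f => ⟨?_, fun hf => ?_⟩,
    Set.ext fun p => subtype_comp_mkQ_add_eq_zero_iff hTG hq p.1 p.2,
    fun h h' e => (inclusion_injective hTG).injective_linearMapComp_left (congrArg Prod.fst e)⟩
  · rintro ⟨p, rfl⟩
    exact isWeightMinusOne_subtype_comp_mkQ_add hTG p.1 p.2
  · obtain ⟨a, b, rfl⟩ := IsWeightMinusOne.exists_eq hTG hf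
    exact ⟨(a, b), rfl⟩
end

section
/- Let R be a ring, V an R-module with submodules T, V', X ⊆ V. Suppose: (i) the image of X in V/T is contained in the image of V' in V/T; (ii) X ∩ T ⊆ V'; and (iii) every R-linear map from X/(X ∩ T) to T/(T ∩ V') is zero. Then X ⊆ V'. -/
/-!
Sending `x ∈ X` to `x - v'` modulo `T ∩ V'`, where `v' ∈ V'` and `x - v' ∈ T`, is a well-defined
linear map `X/(X ∩ T) → T/(T ∩ V')`: it is `X → (T + V')/V'` transported along the second
isomorphism theorem `T/(T ∩ V') ≃ (T + V')/V'`, and it kills `X ∩ T` because `X ∩ T ⊆ V'`.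
Its kernel is exactly the image of `X ∩ V'`, so if it vanishes then `X ⊆ V'`.
-/

namespace Submodule

variable {R V : Type*} [Ring R] [AddCommGroup V] [Module R V] {T V' X : Submodule R V}

theorem le_sup_of_forall_exists_sub_mem (h : ∀ x ∈ X, ∃ v' ∈ V', x - v' ∈ T) : X ≤ T ⊔ V' :=
  fun x hx ↦
    let ⟨v', hv', hxv'⟩ := h x hx
    mem_sup.2 ⟨x - v', hxv', v', hv', sub_add_cancel x v'⟩

def toSupQuotientOfLeSup (hX : X ≤ T ⊔ V') : X →ₗ[R] ↥(T ⊔ V') ⧸ V'.comap (T ⊔ V').subtype :=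
  (V'.comap (T ⊔ V').subtype).mkQ ∘ₗ inclusion hX

theorem toSupQuotientOfLeSup_eq_zero_iff (hX : X ≤ T ⊔ V') (x : X) :
    toSupQuotientOfLeSup hX x = 0 ↔ (x : V) ∈ V' :=
  Quotient.mk_eq_zero _

noncomputable def quotientInfMapOfLeSup (hX : X ≤ T ⊔ V') (hXT : X ⊓ T ≤ V') :
    X ⧸ (X ⊓ T).comap X.subtype →ₗ[R] T ⧸ (T ⊓ V').comap T.subtype :=
  (LinearMap.quotientInfEquivSupQuotient T V').symm.toLinearMap ∘ₗ
    ((X ⊓ T).comap X.subtype).liftQ (toSupQuotientOfLeSup hX) fun x hx ↦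
      (toSupQuotientOfLeSup_eq_zero_iff hX x).2 (hXT hx)

theorem quotientInfMapOfLeSup_mk_eq_zero_iff (hX : X ≤ T ⊔ V') (hXT : X ⊓ T ≤ V') (x : X) :
    quotientInfMapOfLeSup hX hXT (Quotient.mk x) = 0 ↔ (x : V) ∈ V' :=
  (LinearMap.quotientInfEquivSupQuotient T V').symm.map_eq_zero_iff.trans
    (toSupQuotientOfLeSup_eq_zero_iff hX x)

end Submodule

/-- Detection lemma: if the image of `X` mod `T` lies in the image of `V'`,
`X ∩ T ⊆ V'`, and `Hom(X/(X∩T), T/(T∩V')) = 0`, then `X ⊆ V'`. -/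
theorem submodule_le_of_graded_conditions
    {R V : Type*} [Ring R] [AddCommGroup V] [Module R V]
    (T V' X : Submodule R V)
    (h1 : ∀ x ∈ X, ∃ v' ∈ V', x - v' ∈ T)
    (h2 : X ⊓ T ≤ V')
    (h3 : ∀ f : (X ⧸ ((X ⊓ T).comap X.subtype)) →ₗ[R]
        (T ⧸ ((T ⊓ V').comap T.subtype)), f = 0) :
    X ≤ V' := by
  have hX : X ≤ T ⊔ V' := Submodule.le_sup_of_forall_exists_sub_mem h1
  intro x hx
  rw [← Submodule.quotientInfMapOfLeSup_mk_eq_zero_iff hX h2 ⟨x, hx⟩,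
    h3 (Submodule.quotientInfMapOfLeSup hX h2)]
  rfl
end

section
/- Let R be a ring and let 0 → N → E → Q → 0 be a short exact sequence of R-modules. Let N', N'' be submodules of N, and suppose that the quotient extensions 0 → N/N' → E/N' → Q → 0 and 0 → N/N'' → E/N'' → Q → 0 both split, and that Hom_R(Q, N/(N' + N'')) = 0. Then the extension 0 → N/(N' ∩ N'') → E/(N' ∩ N'') → Q → 0 also splits. -/
/-!
The given sections `s'` and `s''` induce two maps `Q → E ⧸ (N' ⊔ N'')` whose difference dies in
`E ⧸ N = Q`, so it factors through `N ⧸ (N' ⊔ N'')` and vanishes by the `Hom` hypothesis.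
Hence `(s', s'')` takes values in the fibre product `E ⧸ N' ×_{E ⧸ (N' ⊔ N'')} E ⧸ N''`, which is
`E ⧸ (N' ⊓ N'')`, and lifts to the required section.
-/

namespace LinearMap

variable {R M P Q : Type*} [Semiring R] [AddCommMonoid M] [AddCommMonoid P] [AddCommMonoid Q]
  [Module R M] [Module R P] [Module R Q]

theorem exists_comp_eq_of_range_le {i : M →ₗ[R] P} (hi : Function.Injective i)
    {f : Q →ₗ[R] P} (h : range f ≤ range i) : ∃ g : Q →ₗ[R] M, i ∘ₗ g = f :=
  ⟨(LinearEquiv.ofInjective i hi).symm ∘ₗ f.codRestrict _ fun x => h ⟨x, rfl⟩, by ext; simp⟩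

end LinearMap

namespace Submodule

open LinearMap

variable {R E Q : Type*} [Ring R] [AddCommGroup E] [Module R E] [AddCommGroup Q] [Module R Q]

theorem factor_prod_factor_injective (A B : Submodule R E) :
    Function.Injective ((factor (inf_le_left : A ⊓ B ≤ A)).prod (factor inf_le_right)) := by
  rw [← ker_eq_bot, ker_eq_bot']
  intro z hz
  obtain ⟨e, rfl⟩ := Quotient.mk_surjective _ z
  obtain ⟨hA, hB⟩ := Prod.mk_eq_zero.mp hz
  exact (Quotient.mk_eq_zero _).mpr ⟨(Quotient.mk_eq_zero _).mp hA, (Quotient.mk_eq_zero _).mp hB⟩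

theorem exists_factor_inf_eq {A B : Submodule R E} {x : E ⧸ A} {y : E ⧸ B}
    (h : factor (le_sup_left : A ≤ A ⊔ B) x = factor le_sup_right y) :
    ∃ z : E ⧸ (A ⊓ B), factor inf_le_left z = x ∧ factor inf_le_right z = y := by
  obtain ⟨e, rfl⟩ := Quotient.mk_surjective _ x
  obtain ⟨e', rfl⟩ := Quotient.mk_surjective _ y
  obtain ⟨a, ha, b, hb, hab⟩ : ∃ a ∈ A, ∃ b ∈ B, a + b = e - e' := by
    rw [← mem_sup, ← Quotient.eq]
    exact h
  refine ⟨(A ⊓ B).mkQ (e - a), ?_, ?_⟩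
  · rw [factor_mk, mkQ_apply, Quotient.eq, sub_sub_cancel_left]
    exact A.neg_mem ha
  · have hb' : e - a - e' = b := by rw [sub_right_comm, ← hab, add_sub_cancel_left]
    rw [factor_mk, mkQ_apply, Quotient.eq, hb']
    exact hb

theorem exists_factor_inf_comp {A B : Submodule R E} {t : Q →ₗ[R] E ⧸ A} {t' : Q →ₗ[R] E ⧸ B}
    (h : factor (le_sup_left : A ≤ A ⊔ B) ∘ₗ t = factor le_sup_right ∘ₗ t') :
    ∃ s : Q →ₗ[R] E ⧸ (A ⊓ B), factor inf_le_left ∘ₗ s = t ∧ factor inf_le_right ∘ₗ s = t' := by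
  obtain ⟨s, hs⟩ := exists_comp_eq_of_range_le (factor_prod_factor_injective A B)
    (f := t.prod t') <| by
      rintro _ ⟨x, rfl⟩
      obtain ⟨z, hz, hz'⟩ := exists_factor_inf_eq (congr($h x))
      exact ⟨z, by simp [hz, hz']⟩
  exact ⟨s, LinearMap.ext fun x => congr(($hs x).1), LinearMap.ext fun x => congr(($hs x).2)⟩

theorem eq_zero_of_factor_comp_eq_zero {S N : Submodule R E} (h : S ≤ N)
    (hhom : ∀ f : Q →ₗ[R] N ⧸ S.comap N.subtype, f = 0) {u : Q →ₗ[R] E ⧸ S}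
    (hu : factor h ∘ₗ u = 0) : u = 0 := by
  let ι : N ⧸ S.comap N.subtype →ₗ[R] E ⧸ S :=
    (S.comap N.subtype).liftQ (S.mkQ ∘ₗ N.subtype) (by rw [ker_comp, ker_mkQ])
  have hg : Function.Injective ι := by
    rw [← ker_eq_bot]
    exact ker_liftQ_eq_bot' _ _ (by rw [ker_comp, ker_mkQ])
  have hrange : range u ≤ range ι := by
    rw [range_liftQ, range_comp, range_subtype, ← comap_id N, ← ker_mapQ, range_le_ker_iff]
    exact hu
  obtain ⟨f, rfl⟩ := exists_comp_eq_of_range_le hg hrange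
  rw [hhom f, comp_zero]

end Submodule

/-- If the extension `0 → N → E → Q → 0` splits after quotienting `N` by `N'`
and by `N''`, and `Hom(Q, N/(N'+N'')) = 0`, then it splits after quotienting
by `N' ∩ N''`. -/
theorem splits_inf_of_splits
    {R E : Type*} [Ring R] [AddCommGroup E] [Module R E]
    (N N' N'' : Submodule R E) (hN' : N' ≤ N) (hN'' : N'' ≤ N)
    (hsplit' : ∃ s : (E ⧸ N) →ₗ[R] (E ⧸ N'),
      ∀ x : E ⧸ N, Submodule.mapQ N' N LinearMap.id (by simpa using hN') (s x) = x)
    (hsplit'' : ∃ s : (E ⧸ N) →ₗ[R] (E ⧸ N''),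
      ∀ x : E ⧸ N, Submodule.mapQ N'' N LinearMap.id (by simpa using hN'') (s x) = x)
    (hhom : ∀ f : (E ⧸ N) →ₗ[R] (↥N ⧸ ((N' ⊔ N'').comap N.subtype)), f = 0) :
    ∃ s : (E ⧸ N) →ₗ[R] (E ⧸ (N' ⊓ N'')),
      ∀ x : E ⧸ N,
        Submodule.mapQ (N' ⊓ N'') N LinearMap.id
          (by simpa using inf_le_left.trans hN') (s x) = x := by
  obtain ⟨s', hs'⟩ := hsplit'
  obtain ⟨s'', hs''⟩ := hsplit''
  have hagree : Submodule.factor le_sup_left ∘ₗ s' = Submodule.factor le_sup_right ∘ₗ s'' := by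
    rw [← sub_eq_zero]
    refine Submodule.eq_zero_of_factor_comp_eq_zero (sup_le hN' hN'') hhom ?_
    ext x
    simp only [LinearMap.comp_sub, LinearMap.sub_apply, LinearMap.comp_apply,
      Submodule.factor_comp_apply]
    rw [hs', hs'', sub_self, LinearMap.zero_apply]
  obtain ⟨s, hs, -⟩ := Submodule.exists_factor_inf_comp hagree
  refine ⟨s, fun x => ?_⟩
  have hx := hs' x
  rwa [← hs, LinearMap.comp_apply, Submodule.factor_comp_apply] at hx
end

section
/- Let ℓ be a prime and n a natural number. Every compact subgroup of the additive topological group ℚ_ℓⁿ is a finitely generated ℤ_ℓ-submodule of ℚ_ℓⁿ; in particular it is topologically isomorphic to ℤ_ℓᵐ for some m ≤ n. -/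
/-!
A closed subgroup is stable under the closure of `ℤ` in `ℤ_ℓ`, i.e. it is a `ℤ_ℓ`-submodule. A
compact one is also bounded, hence contained in a lattice `ℓ⁻ᵏ ℤ_ℓⁿ ≅ ℤ_ℓⁿ`; since `ℤ_ℓ` is a PID it
is then free of rank `m ≤ n`. Finally, a `ℤ_ℓ`-linear bijection from the compact `ℤ_ℓᵐ` onto the
Hausdorff group `H` is continuous, hence a homeomorphism.
-/

open Padic

variable {p : ℕ} [Fact p.Prime]

instance PadicInt.continuousSMul : ContinuousSMul ℤ_[p] ℚ_[p] :=
  continuousSMul_of_algebraMap _ _ continuous_subtype_val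

section ClosedSubgroup

variable {E : Type*} [AddCommGroup E] [Module ℤ_[p] E] [TopologicalSpace E]
  [ContinuousSMul ℤ_[p] E]

/-- `ℤ` is dense in `ℤ_[p]`, so `{c | c • x ∈ H}` is a closed set containing `ℤ`. -/
theorem AddSubgroup.padicInt_smul_mem_of_isClosed {H : AddSubgroup E} (hH : IsClosed (H : Set E))
    (c : ℤ_[p]) {x : E} (hx : x ∈ H) : c • x ∈ H := by
  have hclosed : IsClosed ((· • x) ⁻¹' (H : Set E) : Set ℤ_[p]) :=
    hH.preimage (continuous_id.smul continuous_const)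
  have hdense : Dense ((· • x) ⁻¹' (H : Set E) : Set ℤ_[p]) :=
    PadicInt.denseRange_intCast.mono <| by
      rintro _ ⟨z, rfl⟩
      show (z : ℤ_[p]) • x ∈ H
      rw [Int.cast_smul_eq_zsmul]
      exact zsmul_mem hx z
  exact Set.eq_univ_iff_forall.mp (hclosed.closure_eq ▸ hdense.closure_eq) c

def AddSubgroup.toPadicIntSubmodule (H : AddSubgroup E) (hH : IsClosed (H : Set E)) :
    Submodule ℤ_[p] E where
  toAddSubmonoid := H.toAddSubmonoid
  smul_mem' c _ hx := H.padicInt_smul_mem_of_isClosed hH c hx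

end ClosedSubgroup

variable (p) in
/-- `y ↦ p⁻ᵏ • y`; its range is the lattice `p⁻ᵏ ℤ_[p]^ι`. -/
noncomputable def PadicInt.latticeEmbedding (ι : Type*) (k : ℕ) :
    (ι → ℤ_[p]) →ₗ[ℤ_[p]] (ι → ℚ_[p]) :=
  ((p : ℚ_[p]) ^ k)⁻¹ • (Algebra.linearMap ℤ_[p] ℚ_[p]).compLeft ι

theorem PadicInt.latticeEmbedding_injective (ι : Type*) (k : ℕ) :
    Function.Injective (latticeEmbedding p ι k) := by
  have hp : ((p : ℚ_[p]) ^ k)⁻¹ ≠ 0 := by simp [(Fact.out : p.Prime).ne_zero]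
  intro y z h
  funext i
  exact Subtype.coe_injective (smul_right_injective _ hp (congrFun h i))

theorem PadicInt.exists_subset_range_latticeEmbedding {ι : Type*} [Fintype ι]
    {s : Set (ι → ℚ_[p])} (hs : Bornology.IsBounded s) :
    ∃ k, s ⊆ LinearMap.range (latticeEmbedding p ι k) := by
  have hp : 1 < (p : ℝ) := by exact_mod_cast (Fact.out : p.Prime).one_lt
  obtain ⟨C, hC⟩ := hs.exists_norm_le
  obtain ⟨k, hk⟩ := pow_unbounded_of_one_lt C hp
  refine ⟨k, fun x hx => ⟨fun i => ⟨(p : ℚ_[p]) ^ k * x i, ?_⟩, ?_⟩⟩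
  · calc ‖(p : ℚ_[p]) ^ k * x i‖ = ((p : ℝ) ^ k)⁻¹ * ‖x i‖ := by
          rw [norm_mul, norm_pow, Padic.norm_p, inv_pow]
      _ ≤ ((p : ℝ) ^ k)⁻¹ * (p : ℝ) ^ k := by
          gcongr; exact (norm_le_pi_norm x i).trans ((hC x hx).trans hk.le)
      _ = 1 := inv_mul_cancel₀ (by positivity)
  · funext i
    show ((p : ℚ_[p]) ^ k)⁻¹ * ((p : ℚ_[p]) ^ k * x i) = x i
    exact inv_mul_cancel_left₀ (pow_ne_zero k (by exact_mod_cast (Fact.out : p.Prime).ne_zero)) _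

theorem Submodule.exists_linearEquiv_fin_of_le_range {R M F : Type*} [CommRing R] [IsDomain R]
    [IsPrincipalIdealRing R] [AddCommGroup M] [Module R M] [AddCommGroup F] [Module R F]
    [Module.Free R F] [Module.Finite R F] {f : F →ₗ[R] M} (hf : Function.Injective f)
    {N : Submodule R M} (hN : N ≤ LinearMap.range f) :
    ∃ m ≤ Module.finrank R F, Nonempty (N ≃ₗ[R] (Fin m → R)) := by
  let e : N.comap f ≃ₗ[R] N :=
    (equivMapOfInjective f hf _).trans (LinearEquiv.ofEq _ _ (map_comap_eq_self hN))
  obtain ⟨m, b⟩ := (N.comap f).basisOfPid (Module.Free.chooseBasis R F)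
  refine ⟨m, ?_, ⟨e.symm.trans b.equivFun⟩⟩
  simpa [Module.finrank_eq_card_basis b] using (N.comap f).finrank_le

/-- Every compact subgroup of `ℚ_ℓⁿ` is a finitely generated `ℤ_ℓ`-submodule,
and is topologically isomorphic to `ℤ_ℓᵐ` for some `m ≤ n`. -/
theorem compact_subgroup_of_padic_vector_space
    (ℓ : ℕ) [Fact ℓ.Prime] (n : ℕ)
    (H : AddSubgroup (Fin n → ℚ_[ℓ])) (hH : IsCompact (H : Set (Fin n → ℚ_[ℓ]))) :
    (∃ M : Submodule ℤ_[ℓ] (Fin n → ℚ_[ℓ]), M.FG ∧ M.toAddSubgroup = H) ∧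
    ∃ m : ℕ, m ≤ n ∧ ∃ e : H ≃+ (Fin m → ℤ_[ℓ]),
      Continuous e ∧ Continuous e.symm := by
  let M := H.toPadicIntSubmodule (p := ℓ) hH.isClosed
  obtain ⟨k, hk⟩ := PadicInt.exists_subset_range_latticeEmbedding hH.isBounded
  obtain ⟨m, hmn, ⟨ψ⟩⟩ := Submodule.exists_linearEquiv_fin_of_le_range
    (PadicInt.latticeEmbedding_injective _ k) (N := M) hk
  have hFG : M.FG := Module.Finite.iff_fg.mp (Module.Finite.equiv ψ.symm)
  have hψ : Continuous ψ.symm := ψ.symm.toLinearMap.continuous_on_pi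
  refine ⟨⟨M, hFG, rfl⟩, m, by simpa using hmn, ψ.toAddEquiv, ?_, hψ⟩
  exact (hψ.homeoOfEquivCompactToT2 (f := ψ.symm.toEquiv)).symm.continuous
end
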